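/- Let P be a finite poc-set and a ∈ P a proper element. If a is nested with every element of P (i.e., for every proper b ≠ a, a*, one of a ≤ b, a ≤ b*, a* ≤ b, a* ≤ b* holds), then there is exactly one edge {u, v} of Γ(P) with u Δ v = {a, a*}. -/

import Mathlib

structure PocSet (P : Type*) [PartialOrder P] where
  zero : P
  zero_le : ∀ a : P, zero ≤ a
  star : P → P
  star_star : ∀ a : P, star (star a) = a
  star_anti : ∀ a b : P, a ≤ b → star b ≤ star a
  eq_zero_of_le_star : ∀ a : P, a ≤ star a → a = zero

namespace PocSet

variable {P : Type*} [PartialOrder P]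

/-- The maximum element `1 = 0*` of a poc-set. -/
def one (S : PocSet P) : P := S.star S.zero

/-- An element is proper if it is neither `0` nor `1`. -/
def Proper (S : PocSet P) (a : P) : Prop := a ≠ S.zero ∧ a ≠ S.one

/-- A subset is coherent if `a ≤ b*` holds for no two of its members. -/
def Coherent (S : PocSet P) (α : Set P) : Prop := ∀ a ∈ α, ∀ b ∈ α, ¬ a ≤ S.star b

/-- A vertex of `Γ(P)`: a coherent `*`-selection. -/
def IsVertex (S : PocSet P) (α : Set P) : Prop :=
  S.Coherent α ∧ ∀ a : P, a ∈ α ↔ S.star a ∉ α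

/-- The metric `Δ(u,v) = |u Δ v| / 2` on vertices. -/
noncomputable def delta (S : PocSet P) (u v : Set P) : ℝ :=
  ((symmDiff u v).ncard : ℝ) / 2

/-- The median of three sets. -/
def med (u v w : Set P) : Set P := (u ∩ v) ∪ (v ∩ w) ∪ (u ∩ w)

end PocSet

/-- A morphism of poc-sets: sends `0` to `0`, preserves order, commutes with `*`. -/
def IsPocMorphism {P Q : Type*} [PartialOrder P] [PartialOrder Q]
    (S : PocSet P) (T : PocSet Q) (f : P → Q) : Prop :=
  f S.zero = T.zero ∧ (∀ a b : P, a ≤ b → f a ≤ f b) ∧ ∀ a : P, f (S.star a) = T.star (f a)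

/-!
If `a` is nested with everything, every `b ∉ {a, a*}` has `b` or `b*` above `a` or `a*`.
On an edge `(u, v)` across `{a, a*}` with `a ∈ u`, the vertex `u` is upward closed and contains
`a`, while `v` contains `a*` and agrees with `u` off `{a, a*}`; so `u` contains everything above
`a` or `a*` (other than `a*`), and this decides every `b`. Hence `u` is forced, and then so is
`v = u Δ {a, a*}`. Conversely `{b | a ≤ b ∨ a* < b}` is a coherent `*`-selection, and swapping
the roles of `a` and `a*` gives its neighbour.
-/

namespace PocSet

variable {P : Type*} [PartialOrder P] (S : PocSet P) {a b c : P} {u v u' v' : Set P}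

def Nested (a b : P) : Prop :=
  a ≤ b ∨ a ≤ S.star b ∨ S.star a ≤ b ∨ S.star a ≤ S.star b

/-- The edge `{u, v}` of `Γ(P)` with `u Δ v = {a, a*}`, recorded as the pair with `a ∈ u`. -/
def IsEdgeAcross (a : P) (u v : Set P) : Prop :=
  S.IsVertex u ∧ S.IsVertex v ∧ a ∈ u ∧ symmDiff u v = {a, S.star a}

def vertexAt (a : P) : Set P := {b | a ≤ b ∨ S.star a < b}

theorem star_injective : Function.Injective S.star :=
  Function.LeftInverse.injective S.star_star

theorem le_star_comm : a ≤ S.star b ↔ b ≤ S.star a :=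
  ⟨fun h => by simpa only [S.star_star] using S.star_anti _ _ h,
    fun h => by simpa only [S.star_star] using S.star_anti _ _ h⟩

theorem le_one (a : P) : a ≤ S.one :=
  S.le_star_comm.mp (S.zero_le _)

theorem star_ne_zero (ha : a ≠ S.one) : S.star a ≠ S.zero := fun h =>
  ha (by rw [one, ← h, S.star_star])

theorem nested_of_not_proper (hb : ¬ S.Proper b) : S.Nested a b := by
  rw [Proper, not_and_or, not_not, not_not] at hb
  rcases hb with rfl | rfl
  · exact Or.inr (Or.inl (S.le_one a))
  · exact Or.inl (S.le_one a)

theorem Coherent.star_notMem {α : Set P} (hα : S.Coherent α) (hb : b ∈ α) :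
    S.star b ∉ α := fun hb' => hα b hb _ hb' (by rw [S.star_star])

theorem isVertex_of_coherent {α : Set P} (hα : S.Coherent α)
    (hmem : ∀ b, b ∈ α ∨ S.star b ∈ α) : S.IsVertex α :=
  ⟨hα, fun b => ⟨hα.star_notMem S, (hmem b).resolve_right⟩⟩

variable {S}

theorem IsVertex.star_notMem (hu : S.IsVertex u) (hb : b ∈ u) : S.star b ∉ u :=
  (hu.2 b).mp hb

theorem IsVertex.mem_of_le (hu : S.IsVertex u) (hb : b ∈ u) (hbc : b ≤ c) : c ∈ u := by
  by_contra hc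
  exact hu.1 b hb _ ((hu.2 _).mpr (by rwa [S.star_star])) (by rwa [S.star_star])

variable (S)

theorem coherent_vertexAt (ha : a ≠ S.zero) (has : S.star a ≠ S.zero) :
    S.Coherent (S.vertexAt a) := by
  rintro b (hb | hb) c (hc | hc) hbc
  · exact ha (S.eq_zero_of_le_star a
      (hb.trans (hbc.trans (S.star_anti _ _ hc))))
  · exact hc.not_ge ((S.le_star_comm.mp hbc).trans (S.star_anti _ _ hb))
  · exact hb.not_ge (hbc.trans (S.star_anti _ _ hc))
  · exact has (S.eq_zero_of_le_star _ (hb.le.trans (hbc.trans (S.star_anti _ _ hc.le))))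

theorem isVertex_vertexAt (ha : a ≠ S.zero) (has : S.star a ≠ S.zero)
    (hnest : ∀ b, b ≠ a → b ≠ S.star a → S.Nested a b) : S.IsVertex (S.vertexAt a) := by
  refine S.isVertex_of_coherent (S.coherent_vertexAt ha has) fun b => ?_
  by_cases hba : b = a
  · exact Or.inl (Or.inl hba.ge)
  by_cases hbs : b = S.star a
  · exact Or.inr (Or.inl (by rw [hbs, S.star_star]))
  rcases hnest b hba hbs with h | h | h | h
  · exact Or.inl (Or.inl h)
  · exact Or.inr (Or.inl h)
  · exact Or.inl (Or.inr (h.lt_of_ne (Ne.symm hbs)))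
  · exact Or.inr (Or.inr (h.lt_of_ne fun h' => hba (S.star_injective h').symm))

theorem symmDiff_vertexAt_star (ha : a ≠ S.zero) (has : S.star a ≠ S.zero) :
    symmDiff (S.vertexAt a) (S.vertexAt (S.star a)) = {a, S.star a} := by
  have hna : ¬ S.star a ≤ a := fun h => has (S.eq_zero_of_le_star _ (by rwa [S.star_star]))
  have hnsa : ¬ a ≤ S.star a := fun h => ha (S.eq_zero_of_le_star _ h)
  ext b
  simp only [vertexAt, S.star_star, Set.mem_symmDiff, Set.mem_ofPred_eq,
    Set.mem_insert_iff, Set.mem_singleton_iff]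
  by_cases hba : b = a
  · subst hba
    simp [hna]
  by_cases hbs : b = S.star a
  · subst hbs
    simp [hnsa]
  simp only [lt_iff_le_and_ne, ne_comm, hba, hbs]
  tauto

theorem isEdgeAcross_vertexAt (ha : S.Proper a)
    (hnest : ∀ b, b ≠ a → b ≠ S.star a → S.Nested a b) :
    S.IsEdgeAcross a (S.vertexAt a) (S.vertexAt (S.star a)) := by
  have has := S.star_ne_zero ha.2
  refine ⟨S.isVertex_vertexAt ha.1 has hnest, ?_, Or.inl le_rfl,
    S.symmDiff_vertexAt_star ha.1 has⟩
  refine S.isVertex_vertexAt has (by rw [S.star_star]; exact ha.1) fun b hb hb' => ?_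
  rw [S.star_star] at hb'
  have := hnest b hb' hb
  simp only [Nested, S.star_star] at this ⊢
  tauto

variable {S}

theorem IsEdgeAcross.mem_of_le (he : S.IsEdgeAcross a u v) (hb : b ∉ ({a, S.star a} : Set P))
    (hab : a ≤ b ∨ S.star a ≤ b) : b ∈ u := by
  obtain ⟨hu, hv, hau, huv⟩ := he
  rcases hab with h | h
  · exact hu.mem_of_le hau h
  · have has : S.star a ∈ symmDiff u v := by rw [huv]; exact Or.inr rfl
    have hasv : S.star a ∈ v :=
      ((Set.mem_symmDiff.mp has).resolve_left fun h' => hu.star_notMem hau h'.1).1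
    have hbv := hv.mem_of_le hasv h
    rw [← huv, Set.mem_symmDiff] at hb
    tauto

theorem IsEdgeAcross.mem_iff (he : S.IsEdgeAcross a u v) (hb : b ∉ ({a, S.star a} : Set P))
    (hnest : S.Nested a b) : b ∈ u ↔ a ≤ b ∨ S.star a ≤ b := by
  refine ⟨fun hbu => ?_, he.mem_of_le hb⟩
  by_contra hab
  have hbs : S.star b ∉ ({a, S.star a} : Set P) := by
    rintro (h | h)
    · exact hb (Or.inr (show b = S.star a by rw [← h, S.star_star]))
    · exact hb (Or.inl (S.star_injective h))
  exact he.1.star_notMem hbu (he.mem_of_le hbs (by unfold Nested at hnest; tauto))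

theorem IsEdgeAcross.fst_eq (hnest : ∀ b, b ≠ a → b ≠ S.star a → S.Nested a b)
    (he : S.IsEdgeAcross a u v) (he' : S.IsEdgeAcross a u' v') : u = u' := by
  ext b
  by_cases hba : b = a
  · subst hba
    exact iff_of_true he.2.2.1 he'.2.2.1
  by_cases hbs : b = S.star a
  · subst hbs
    exact iff_of_false (he.1.star_notMem he.2.2.1) (he'.1.star_notMem he'.2.2.1)
  have hb : b ∉ ({a, S.star a} : Set P) := by rintro (h | h) <;> contradiction
  rw [he.mem_iff hb (hnest b hba hbs), he'.mem_iff hb (hnest b hba hbs)]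

theorem IsEdgeAcross.eq (hnest : ∀ b, b ≠ a → b ≠ S.star a → S.Nested a b)
    (he : S.IsEdgeAcross a u v) (he' : S.IsEdgeAcross a u' v') : (u, v) = (u', v') := by
  have hu := he.fst_eq hnest he'
  have hv : v = symmDiff u {a, S.star a} := by rw [← he.2.2.2, symmDiff_symmDiff_cancel_left]
  have hv' : v' = symmDiff u' {a, S.star a} := by
    rw [← he'.2.2.2, symmDiff_symmDiff_cancel_left]
  rw [hv, hv', hu]

end PocSet

theorem stmt13_general {P : Type*} [PartialOrder P] (S : PocSet P) (a : P)
    (ha : S.Proper a)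
    (hnest : ∀ b : P, S.Proper b → b ≠ a → b ≠ S.star a →
      a ≤ b ∨ a ≤ S.star b ∨ S.star a ≤ b ∨ S.star a ≤ S.star b) :
    ∃! p : Set P × Set P, S.IsVertex p.1 ∧ S.IsVertex p.2 ∧ a ∈ p.1 ∧
      symmDiff p.1 p.2 = {a, S.star a} := by
  have hnested : ∀ b, b ≠ a → b ≠ S.star a → S.Nested a b := fun b hba hbs =>
    (em (S.Proper b)).elim (fun hb => hnest b hb hba hbs) S.nested_of_not_proper
  have hedge := S.isEdgeAcross_vertexAt ha hnested
  exact ⟨(S.vertexAt a, S.vertexAt (S.star a)), hedge,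
    fun p hp => PocSet.IsEdgeAcross.eq hnested hp hedge⟩

theorem stmt13 {P : Type*} [PartialOrder P] [Finite P] (S : PocSet P) (a : P)
    (ha : S.Proper a)
    (hnest : ∀ b : P, S.Proper b → b ≠ a → b ≠ S.star a →
      a ≤ b ∨ a ≤ S.star b ∨ S.star a ≤ b ∨ S.star a ≤ S.star b) :
    ∃! p : Set P × Set P, S.IsVertex p.1 ∧ S.IsVertex p.2 ∧ a ∈ p.1 ∧
      symmDiff p.1 p.2 = {a, S.star a} :=
  stmt13_general S a ha hnest
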